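/- arXiv:1909.10689 — 2 statements merged into one kernel-verified Lean document; each statement's English description precedes it below -/
import Mathlib

section
/- Let α < 1 - 1/p, 1 < p < ∞, R > e. There exist positive constants C₃ and L (depending only on α, p, R) such that for every u ∈ C_c^∞((0,1]): ∫₀¹ (|u'|^p − Λ_{α,p}|u/t|^p) t^{αp} dt ≥ C₃ ∫₀¹ |u/t|^p t^{αp} (log(R/t))^{-2} dt + L|u(1)|^p. -/
open MeasureTheory Real Set

lemma bernoulli_quad {q x : ℝ} (hq : 1 ≤ q) (hx0 : 0 ≤ x) (hx1 : x < 1) :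
    (1 - x) ^ q ≤ 1 - q * x + q ^ 2 * x ^ 2 := by
  have h1 : (0:ℝ) < 1 + q * x := by nlinarith
  have h2 : (1 - x : ℝ) ≤ (1 + x)⁻¹ := by
    rw [inv_eq_one_div, le_div_iff₀ (by linarith)]
    nlinarith
  have h3 : (1 - x) ^ q ≤ ((1 + x) ^ q)⁻¹ := by
    calc (1 - x) ^ q ≤ ((1 + x)⁻¹) ^ q :=
          Real.rpow_le_rpow (by linarith) h2 (by linarith)
      _ = ((1 + x) ^ q)⁻¹ := by rw [← Real.inv_rpow (by linarith)]
  have h4 : 1 + q * x ≤ (1 + x) ^ q := one_add_mul_self_le_rpow_one_add (by linarith) hq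
  have h5 : ((1 + x) ^ q)⁻¹ ≤ (1 + q * x)⁻¹ := inv_anti₀ h1 h4
  have h6 : (1 + q * x)⁻¹ ≤ 1 - q * x + q ^ 2 * x ^ 2 := by
    rw [inv_le_iff_one_le_mul₀ h1]
    nlinarith [mul_nonneg (pow_nonneg (le_trans zero_le_one hq) 3) (pow_nonneg hx0 3)]
  linarith

lemma core_bracket {p lam q ε h C : ℝ} (hp : 1 < p) (hlam : 0 < lam)
    (hq : q = p / (p - 1)) (hε0 : 0 < ε) (hε2 : ε ≤ 1 / 2)
    (hεK : (p - 1) * q ^ 2 * lam * ε ≤ 1 / 2) (hC : C = ε * lam ^ (p - 1) / 2)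
    (hh0 : 0 < h) (hh1 : h < 1) :
    C * h ^ 2 + (p - 1) * lam ^ p * (1 - ε * h) ^ q + lam ^ p
      ≤ p * lam ^ p * (1 - ε * h) + ε * lam ^ (p - 1) * h ^ 2 := by
  have hp1 : (0:ℝ) < p - 1 := by linarith
  have hq1 : 1 ≤ q := by rw [hq]; rw [le_div_iff₀ hp1]; linarith
  have hx0 : 0 ≤ ε * h := by positivity
  have hx1 : ε * h < 1 := by nlinarith
  have hB := bernoulli_quad hq1 hx0 hx1
  have hpq : (p - 1) * q = p := by rw [hq]; field_simp
  have hLp : lam ^ p = lam ^ (p - 1) * lam := by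
    rw [← Real.rpow_add_one hlam.ne' (p - 1)]; ring_nf
  have hLp1 : (0:ℝ) < lam ^ (p - 1) := Real.rpow_pos_of_pos hlam _
  have hmul : (p - 1) * lam ^ p * (1 - ε * h) ^ q
      ≤ (p - 1) * lam ^ p * (1 - q * (ε * h) + q ^ 2 * (ε * h) ^ 2) := by
    apply mul_le_mul_of_nonneg_left hB
    positivity
  have key : (p - 1) * lam ^ p * (1 - q * (ε * h) + q ^ 2 * (ε * h) ^ 2) + lam ^ p + C * h ^ 2
      ≤ p * lam ^ p * (1 - ε * h) + ε * lam ^ (p - 1) * h ^ 2 := by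
    set L := lam ^ (p - 1) with hLdef
    rw [hC, hLp]
    have hm : L * ε * h ^ 2 * ((p - 1) * q ^ 2 * lam * ε - 1 / 2) ≤ 0 := by
      apply mul_nonpos_of_nonneg_of_nonpos (by positivity) (by linarith)
    have h0 : p - (p - 1) * q = 0 := by linarith
    have hid : ((p - 1) * (L * lam) * (1 - q * (ε * h) + q ^ 2 * (ε * h) ^ 2) + L * lam
          + (ε * L / 2) * h ^ 2) - (p * (L * lam) * (1 - ε * h) + ε * L * h ^ 2)
        = L * lam * (p - (p - 1) * q) * (ε * h)
          + L * ε * h ^ 2 * ((p - 1) * q ^ 2 * lam * ε - 1 / 2) := by ring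
    rw [h0, mul_zero, zero_mul, zero_add] at hid
    linarith
  linarith

lemma young_step {p q lam t v A B : ℝ} (hp : 1 < p) (hq : q = p / (p - 1))
    (hlam : 0 < lam) (ht : 0 < t) (hv : 0 < v) (hA : 0 ≤ A) (hB : 0 ≤ B) :
    p * (lam ^ (p - 1) * t ^ (1 - p) * v) * B ^ (p - 1) * A
      ≤ A ^ p + (p - 1) * (lam ^ p * t ^ (-p) * v ^ q) * B ^ p := by
  have hpq : p.HolderConjugate q := (Real.holderConjugate_iff_eq_conjExponent hp).2 hq
  set T : ℝ := lam ^ (p - 1) * t ^ (1 - p) * v with hT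
  have hT0 : 0 ≤ T := by positivity
  have hy := Real.young_inequality_of_nonneg hA
    (mul_nonneg hT0 (Real.rpow_nonneg hB (p - 1))) hpq
  have hX : (T * B ^ (p - 1)) ^ q = lam ^ p * t ^ (-p) * v ^ q * B ^ p := by
    rw [Real.mul_rpow hT0 (Real.rpow_nonneg hB (p - 1)), hT,
      Real.mul_rpow (by positivity) hv.le,
      Real.mul_rpow (by positivity) (by positivity),
      ← Real.rpow_mul hlam.le, ← Real.rpow_mul ht.le, ← Real.rpow_mul hB]
    have h1 : (p - 1) * q = p := hpq.sub_one_mul_conj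
    have h2 : (1 - p) * q = -p := by rw [show (1 - p : ℝ) = -(p - 1) by ring, neg_mul, h1]
    rw [h1, h2]
  rw [hX] at hy
  have hq0 : q ≠ 0 := hpq.symm.ne_zero
  have hp0 : (0:ℝ) < p := by linarith
  have h3 : p * (A * (T * B ^ (p - 1)))
      ≤ p * (A ^ p / p + lam ^ p * t ^ (-p) * v ^ q * B ^ p / q) :=
    mul_le_mul_of_nonneg_left hy hp0.le
  have h4 : p * (A ^ p / p + lam ^ p * t ^ (-p) * v ^ q * B ^ p / q)
      = A ^ p + (p / q) * (lam ^ p * t ^ (-p) * v ^ q * B ^ p) := by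
    field_simp
  rw [h4, hpq.div_conj_eq_sub_one] at h3
  calc p * T * B ^ (p - 1) * A = p * (A * (T * B ^ (p - 1))) := by ring
    _ ≤ _ := h3.trans (le_of_eq (by ring))

lemma hasDerivAt_phi {lam p α R ε t : ℝ} (ht : 0 < t)
    (hlt : Real.log R - Real.log t ≠ 0) (hplam : α * p - p + 1 = -(p * lam)) :
    HasDerivAt
      (fun s => lam ^ (p - 1) * (s ^ (α * p - p + 1) * (1 - ε * (Real.log R - Real.log s)⁻¹)))
      (lam ^ (p - 1) * (t ^ (α * p - p) *
        (-(p * lam) * (1 - ε * (Real.log R - Real.log t)⁻¹)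
          - ε * ((Real.log R - Real.log t)⁻¹) ^ 2))) t := by
  have d1 : HasDerivAt (fun s : ℝ => s ^ (α * p - p + 1))
      ((α * p - p + 1) * t ^ (α * p - p)) t := by
    have := Real.hasDerivAt_rpow_const (x := t) (p := α * p - p + 1) (Or.inl ht.ne')
    have he : α * p - p + 1 - 1 = α * p - p := by ring
    rwa [he] at this
  have d2 : HasDerivAt (fun s : ℝ => Real.log R - Real.log s) (-t⁻¹) t := by
    simpa using (Real.hasDerivAt_log ht.ne').const_sub (Real.log R)
  have d3 := ((d2.inv hlt).const_mul ε).const_sub 1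
  have d4 := (d1.mul d3).const_mul (lam ^ (p - 1))
  refine HasDerivAt.congr_deriv d4 ?_
  symm
  simp only [Pi.inv_apply]
  have h5 : t ^ (α * p - p + 1) = t ^ (α * p - p) * t := by
    rw [← Real.rpow_add_one ht.ne']
  rw [h5, hplam]
  field_simp
  ring

lemma cont_absp {p : ℝ} (hp : 1 < p) : Continuous (fun x : ℝ => p * |x| ^ (p - 2) * x) := by
  have h := (contDiff_norm_rpow (E := ℝ) hp).continuous_deriv le_rfl
  have : (deriv fun x : ℝ => ‖x‖ ^ p) = fun x : ℝ => p * |x| ^ (p - 2) * x := by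
    funext x
    rw [(hasDerivAt_norm_rpow x hp).deriv]
    simp [Real.norm_eq_abs]
  rwa [this] at h

lemma absp_le {p x y : ℝ} (hp : 1 < p) : p * |x| ^ (p - 2) * x * y ≤ p * |x| ^ (p - 1) * |y| := by
  rcases eq_or_ne x 0 with rfl | hx
  · simp [Real.zero_rpow (by linarith : p - 1 ≠ 0)]
  · have h1 : |x| ^ (p - 1) = |x| ^ (p - 2) * |x| := by
      rw [← Real.rpow_add_one (abs_ne_zero.2 hx)]; ring_nf
    calc p * |x| ^ (p - 2) * x * y ≤ |p * |x| ^ (p - 2) * x * y| := le_abs_self _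
      _ = p * |x| ^ (p - 2) * |x| * |y| := by
          rw [abs_mul, abs_mul, abs_mul]
          rw [abs_of_nonneg (by linarith : (0:ℝ) ≤ p),
            abs_of_nonneg (Real.rpow_nonneg (abs_nonneg x) _)]
      _ = p * |x| ^ (p - 1) * |y| := by rw [h1]; ring

set_option maxHeartbeats 1000000 in
/-- Noncritical case with logarithmic remainder and boundary term. -/
theorem hardy_noncritical_remainder (p α R : ℝ) (hp : 1 < p) (hα : α < 1 - 1/p)
    (hR : Real.exp 1 < R) :
    ∃ C₃ > (0:ℝ), ∃ L > (0:ℝ), ∀ u : ℝ → ℝ, ContDiff ℝ (⊤ : ℕ∞) u →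
      (∃ a > (0:ℝ), ∀ t < a, u t = 0) →
      ∫ t in Ioc (0:ℝ) 1,
          (|deriv u t| ^ p - (1 - 1/p - α) ^ p * (|u t| / t) ^ p) * t ^ (α * p) ≥
        C₃ * (∫ t in Ioc (0:ℝ) 1,
            (|u t| / t) ^ p * t ^ (α * p) * (Real.log (R / t)) ^ (-(2:ℝ)))
          + L * |u 1| ^ p := by
  have hp0 : (0:ℝ) < p := by linarith
  have hp1 : (0:ℝ) < p - 1 := by linarith
  set lam : ℝ := 1 - 1/p - α with hlam_def
  have hlam : 0 < lam := by rw [hlam_def]; linarith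
  set q : ℝ := p / (p - 1) with hq_def
  have hqpos : 0 < q := by rw [hq_def]; positivity
  set K : ℝ := (p - 1) * q ^ 2 with hK_def
  have hK : 0 < K := by rw [hK_def]; positivity
  set ε : ℝ := min (1/2) (1/(2*K*lam)) with hε_def
  have hε0 : 0 < ε := lt_min (by norm_num) (by positivity)
  have hε2 : ε ≤ 1/2 := min_le_left _ _
  have hεK : K * lam * ε ≤ 1/2 := by
    have h1 : ε ≤ 1/(2*K*lam) := min_le_right _ _
    have h2 : K * lam * ε ≤ K * lam * (1/(2*K*lam)) :=
      mul_le_mul_of_nonneg_left h1 (by positivity)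
    have h3 : K * lam * (1/(2*K*lam)) = 1/2 := by field_simp
    linarith
  have hLp1 : (0:ℝ) < lam ^ (p - 1) := Real.rpow_pos_of_pos hlam _
  refine ⟨ε * lam ^ (p-1) / 2, by positivity, lam ^ (p-1) / 2, by positivity, ?_⟩
  intro u hu hsupp
  obtain ⟨a, ha, hua⟩ := hsupp
  set b : ℝ := min a 1 / 2 with hb_def
  have hmin0 : 0 < min a 1 := lt_min ha one_pos
  have hb0 : 0 < b := by rw [hb_def]; positivity
  have hba : b < a := by
    have : min a 1 ≤ a := min_le_left _ _
    rw [hb_def]; linarith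
  have hb1 : b < 1 := by
    have : min a 1 ≤ 1 := min_le_right _ _
    rw [hb_def]; linarith
  have hR0 : (0:ℝ) < R := lt_trans (Real.exp_pos 1) hR
  have hlogR : 1 < Real.log R := (Real.lt_log_iff_exp_lt hR0).2 hR
  have hlt : ∀ t : ℝ, 0 < t → t ≤ 1 → 1 < Real.log R - Real.log t := by
    intro t ht0 ht1
    have := Real.log_nonpos ht0.le ht1
    linarith
  have hplam : α * p - p + 1 = -(p * lam) := by
    have : p * lam = p - 1 - p * α := by rw [hlam_def]; field_simp
    linarith
  -- the test function and its derivative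
  set φ : ℝ → ℝ := fun t =>
    lam ^ (p - 1) * (t ^ (α * p - p + 1) * (1 - ε * (Real.log R - Real.log t)⁻¹)) with hφ_def
  set φd : ℝ → ℝ := fun t =>
    lam ^ (p - 1) * (t ^ (α * p - p) *
      (-(p * lam) * (1 - ε * (Real.log R - Real.log t)⁻¹)
        - ε * ((Real.log R - Real.log t)⁻¹) ^ 2)) with hφd_def
  set F : ℝ → ℝ := fun t => |u t| ^ p with hF_def
  set Fd : ℝ → ℝ := fun t => p * |u t| ^ (p - 2) * u t * deriv u t with hFd_def
  have hderivF : ∀ t : ℝ, HasDerivAt F (Fd t) t := by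
    intro t
    exact (hasDerivAt_abs_rpow (u t) hp).comp t ((hu.differentiable (by simp) t).hasDerivAt)
  have hderivφ : ∀ t ∈ Icc b 1, HasDerivAt φ (φd t) t := by
    intro t ht
    have ht0 : 0 < t := lt_of_lt_of_le hb0 ht.1
    exact hasDerivAt_phi ht0 (by have := hlt t ht0 ht.2; linarith) hplam
  set Φd : ℝ → ℝ := fun t => φd t * F t + φ t * Fd t with hΦd_def
  have hderivΦ : ∀ t ∈ Icc b 1, HasDerivAt (fun s => φ s * F s) (Φd t) t := by
    intro t ht
    exact (hderivφ t ht).mul (hderivF t)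
  -- continuity facts
  have hcontF : Continuous F := hu.continuous.abs.rpow_const (fun _ => Or.inr hp0.le)
  have hcontFd : Continuous Fd := by
    have := ((cont_absp hp).comp hu.continuous).mul (hu.continuous_deriv (by simp))
    exact this
  have hcontφ : ContinuousOn φ (Icc b 1) := fun t ht =>
    ((hderivφ t ht).continuousAt).continuousWithinAt
  have hcontinv : ∀ t ∈ Icc b 1, ContinuousAt (fun s : ℝ => (Real.log R - Real.log s)⁻¹) t := by
    intro t ht
    have ht0 : 0 < t := lt_of_lt_of_le hb0 ht.1
    exact (continuousAt_const.sub (Real.continuousAt_log ht0.ne')).inv₀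
      (by have := hlt t ht0 ht.2; intro hc; simp only [Pi.sub_apply] at hc; linarith)
  have hcontφd : ContinuousOn φd (Icc b 1) := by
    intro t ht
    have ht0 : 0 < t := lt_of_lt_of_le hb0 ht.1
    apply ContinuousAt.continuousWithinAt
    apply ContinuousAt.mul continuousAt_const
    apply ContinuousAt.mul
    · exact Real.continuousAt_rpow_const t _ (Or.inl ht0.ne')
    · exact (ContinuousAt.mul continuousAt_const
          (continuousAt_const.sub ((hcontinv t ht).const_mul ε))).sub
        (((hcontinv t ht).pow 2).const_mul ε)
  have hcontΦd : ContinuousOn Φd (Icc b 1) :=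
    (hcontφd.mul hcontF.continuousOn).add (hcontφ.mul hcontFd.continuousOn)
  -- FTC
  have hub : u b = 0 := hua b hba
  have hFTC : ∫ t in Ioc b 1, Φd t = φ 1 * F 1 := by
    have hintΦd : IntervalIntegrable Φd volume b 1 :=
      hcontΦd.intervalIntegrable_of_Icc hb1.le
    have h := intervalIntegral.integral_eq_sub_of_hasDerivAt
      (f := fun s => φ s * F s) (f' := Φd)
      (fun t ht => hderivΦ t (by rwa [uIcc_of_le hb1.le] at ht)) hintΦd
    rw [intervalIntegral.integral_of_le hb1.le] at h
    rw [h, hF_def]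
    simp [hub, Real.zero_rpow hp0.ne']
  -- pointwise key inequality
  have hkey : ∀ t ∈ Ioc b 1,
      ε * lam ^ (p-1) / 2 * ((|u t| / t) ^ p * t ^ (α * p) * (Real.log (R / t)) ^ (-(2:ℝ)))
        + Φd t
      ≤ (|deriv u t| ^ p - lam ^ p * (|u t| / t) ^ p) * t ^ (α * p) := by
    intro t ht
    have ht0 : 0 < t := lt_trans hb0 ht.1
    have ht1 : t ≤ 1 := ht.2
    have hlt1 : 1 < Real.log R - Real.log t := hlt t ht0 ht1
    set hh : ℝ := (Real.log R - Real.log t)⁻¹ with hh_def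
    have hh0 : 0 < hh := by rw [hh_def]; exact inv_pos.2 (by linarith)
    have hh1 : hh < 1 := by rw [hh_def]; exact inv_lt_one_of_one_lt₀ (by linarith)
    have hv0 : 0 < 1 - ε * hh := by nlinarith
    set A : ℝ := |deriv u t| with hA_def
    set B : ℝ := |u t| with hB_def
    have hA0 : 0 ≤ A := abs_nonneg _
    have hB0 : 0 ≤ B := abs_nonneg _
    set W : ℝ := t ^ (α * p - p) with hW_def
    set w : ℝ := t ^ (α * p) with hw_def
    have hW0 : 0 ≤ W := Real.rpow_nonneg ht0.le _
    have hw0 : 0 ≤ w := Real.rpow_nonneg ht0.le _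
    have hlogdiv : Real.log (R / t) = Real.log R - Real.log t := Real.log_div hR0.ne' ht0.ne'
    have hlogpow : (Real.log R - Real.log t) ^ (-(2:ℝ)) = hh ^ 2 := by
      rw [show (-(2:ℝ)) = -((2:ℕ):ℝ) by norm_num, Real.rpow_neg (by linarith),
        Real.rpow_natCast, hh_def, inv_pow]
    have hdivp : (B / t) ^ p = B ^ p * t ^ (-p) := by
      rw [Real.div_rpow hB0 ht0.le, Real.rpow_neg ht0.le, div_eq_mul_inv]
    have hWW : t ^ (-p) * t ^ (α * p) = W := by
      rw [hW_def, ← Real.rpow_add ht0]; congr 1; ring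
    have ht1p : t ^ (α * p - p + 1) = t ^ (1 - p) * w := by
      rw [hw_def, ← Real.rpow_add ht0]; congr 1; ring
    have e1 : (A ^ p - lam ^ p * (B / t) ^ p) * w = A ^ p * w - lam ^ p * (B ^ p * W) := by
      rw [hdivp, ← hWW]; ring
    have e2 : (B / t) ^ p * w * (Real.log (R / t)) ^ (-(2:ℝ)) = B ^ p * W * hh ^ 2 := by
      rw [hlogdiv, hlogpow, hdivp, ← hWW]; ring
    -- Young step
    have hY := young_step (q := q) (v := 1 - ε * hh) hp hq_def hlam ht0 hv0 hA0 hB0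
    have hFd_le : Fd t ≤ p * B ^ (p - 1) * A := absp_le hp
    have hφval : φ t = lam ^ (p-1) * (t ^ (α * p - p + 1) * (1 - ε * hh)) := rfl
    have hφpos : 0 < φ t := by
      rw [hφval]
      exact mul_pos hLp1 (mul_pos (Real.rpow_pos_of_pos ht0 _) hv0)
    have hS2 : φ t * Fd t
        ≤ A ^ p * w + (p - 1) * lam ^ p * (1 - ε * hh) ^ q * (B ^ p * W) := by
      have h1 : φ t * Fd t ≤ φ t * (p * B ^ (p - 1) * A) :=
        mul_le_mul_of_nonneg_left hFd_le hφpos.le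
      have h2 : φ t * (p * B ^ (p - 1) * A)
          = (p * (lam ^ (p-1) * t ^ (1 - p) * (1 - ε * hh)) * B ^ (p-1) * A) * w := by
        rw [hφval, ht1p]; ring
      have h3 := mul_le_mul_of_nonneg_right hY hw0
      have h4 : (A ^ p + (p - 1) * (lam ^ p * t ^ (-p) * (1 - ε * hh) ^ q) * B ^ p) * w
          = A ^ p * w + (p - 1) * lam ^ p * (1 - ε * hh) ^ q * (B ^ p * (t ^ (-p) * w)) := by
        ring
      rw [h4, hw_def, hWW] at h3
      rw [← hw_def] at h3
      calc φ t * Fd t ≤ φ t * (p * B ^ (p - 1) * A) := h1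
        _ = (p * (lam ^ (p-1) * t ^ (1 - p) * (1 - ε * hh)) * B ^ (p-1) * A) * w := h2
        _ ≤ _ := h3
    -- core bracket
    have hcore := core_bracket (C := ε * lam ^ (p-1) / 2) (h := hh) hp hlam hq_def hε0 hε2
      (by rw [← hK_def]; exact hεK) rfl hh0 hh1
    have hLp : lam ^ p = lam ^ (p - 1) * lam := by
      rw [← Real.rpow_add_one hlam.ne' (p - 1)]; norm_num
    rw [hLp] at hcore
    have hX0 : (0:ℝ) ≤ B ^ p * W := mul_nonneg (Real.rpow_nonneg hB0 _) hW0
    have hfin := mul_le_mul_of_nonneg_left hcore hX0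
    have e3 : φd t * F t = lam ^ (p-1) * (W *
        (-(p * lam) * (1 - ε * hh) - ε * hh ^ 2)) * B ^ p := rfl
    rw [e1, e2]
    simp only [hΦd_def]
    rw [e3, hLp]
    have e4 : φ t * Fd t ≤ A ^ p * w + (p - 1) * (lam ^ (p-1) * lam) * (1 - ε * hh) ^ q * (B ^ p * W) := by
      rw [← hLp]; exact hS2
    have hdiff : (ε * lam ^ (p-1) / 2 * (B ^ p * W * hh ^ 2)
          + (lam ^ (p - 1) * (W * (-(p * lam) * (1 - ε * hh) - ε * hh ^ 2)) * B ^ p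
            + (A ^ p * w + (p - 1) * (lam ^ (p-1) * lam) * (1 - ε * hh) ^ q * (B ^ p * W))))
          - (A ^ p * w - lam ^ (p - 1) * lam * (B ^ p * W))
        = (B ^ p * W *
            (ε * lam ^ (p - 1) / 2 * hh ^ 2
              + (p - 1) * (lam ^ (p - 1) * lam) * (1 - ε * hh) ^ q + lam ^ (p - 1) * lam))
          - (B ^ p * W *
            (p * (lam ^ (p - 1) * lam) * (1 - ε * hh) + ε * lam ^ (p - 1) * hh ^ 2)) := by
      ring
    clear_value lam q K ε A B W w hh
    linarith [e4, hfin, hdiff]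
  -- name integrands
  set f1 : ℝ → ℝ := fun t => (|deriv u t| ^ p - lam ^ p * (|u t| / t) ^ p) * t ^ (α * p)
    with hf1_def
  set f2 : ℝ → ℝ := fun t => (|u t| / t) ^ p * t ^ (α * p) * (Real.log (R / t)) ^ (-(2:ℝ))
    with hf2_def
  -- continuity/integrability on [b,1]
  have hne : ∀ t ∈ Icc b 1, t ≠ 0 := fun t ht => (lt_of_lt_of_le hb0 ht.1).ne'
  have hcd : Continuous fun t => |deriv u t| ^ p :=
    (hu.continuous_deriv (by simp)).abs.rpow_const (fun _ => Or.inr hp0.le)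
  have hcq : ContinuousOn (fun t => (|u t| / t) ^ p) (Icc b 1) :=
    (hu.continuous.abs.continuousOn.div continuousOn_id hne).rpow_const
      (fun _ _ => Or.inr hp0.le)
  have hcw : ContinuousOn (fun t : ℝ => t ^ (α * p)) (Icc b 1) :=
    continuousOn_id.rpow_const (fun t ht => Or.inl (hne t ht))
  have hclog : ContinuousOn (fun t : ℝ => (Real.log (R / t)) ^ (-(2:ℝ))) (Icc b 1) := by
    apply ContinuousOn.rpow_const
    · exact ContinuousOn.log (continuousOn_const.div continuousOn_id hne)
        (fun t ht => div_ne_zero hR0.ne' (hne t ht))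
    · intro t ht
      left
      have ht0 : 0 < t := lt_of_lt_of_le hb0 ht.1
      rw [Real.log_div hR0.ne' ht0.ne']
      have := hlt t ht0 ht.2
      intro hc; rw [hc] at this; linarith
  have hcont1 : ContinuousOn f1 (Icc b 1) := by
    rw [hf1_def]
    exact ((hcd.continuousOn.sub (continuousOn_const.mul hcq)).mul hcw)
  have hcont2 : ContinuousOn f2 (Icc b 1) := by
    rw [hf2_def]
    exact (hcq.mul hcw).mul hclog
  have hInt1 : IntegrableOn f1 (Ioc b 1) volume :=
    (hcont1.integrableOn_Icc).mono_set Ioc_subset_Icc_self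
  have hInt2 : IntegrableOn f2 (Ioc b 1) volume :=
    (hcont2.integrableOn_Icc).mono_set Ioc_subset_Icc_self
  have hIntΦd : IntegrableOn Φd (Ioc b 1) volume :=
    (hcontΦd.integrableOn_Icc).mono_set Ioc_subset_Icc_self
  -- nonnegativity of the difference
  have h0 : 0 ≤ ∫ t in Ioc b 1, (f1 t - (ε * lam ^ (p-1) / 2 * f2 t + Φd t)) := by
    apply setIntegral_nonneg measurableSet_Ioc
    intro t ht
    have := hkey t ht
    simp only [hf1_def, hf2_def]
    linarith [this]
  have hI : ∫ t in Ioc b 1, (f1 t - (ε * lam ^ (p-1) / 2 * f2 t + Φd t))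
      = (∫ t in Ioc b 1, f1 t)
        - (ε * lam ^ (p-1) / 2 * (∫ t in Ioc b 1, f2 t) + ∫ t in Ioc b 1, Φd t) := by
    have hg2 : IntegrableOn (fun t => ε * lam ^ (p-1) / 2 * f2 t) (Ioc b 1) volume := by
      exact hInt2.const_mul (ε * lam ^ (p-1) / 2)
    have hg : IntegrableOn (fun t => ε * lam ^ (p-1) / 2 * f2 t + Φd t) (Ioc b 1) volume := by
      exact hg2.add hIntΦd
    rw [integral_sub hInt1 hg, integral_add hg2 hIntΦd, integral_const_mul]
  -- reduce Ioc 0 1 to Ioc b 1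
  have hz1 : ∀ t ∈ Ioc (0:ℝ) b, f1 t = 0 := by
    intro t ht
    have hta : t < a := lt_of_le_of_lt ht.2 hba
    have huz : u t = 0 := hua t hta
    have hdz : deriv u t = 0 := by
      have heq : deriv u t = deriv (fun _ => (0:ℝ)) t :=
        Filter.EventuallyEq.deriv_eq
          (by filter_upwards [Iio_mem_nhds hta] with s hs using hua s hs)
      simpa using heq
    simp [hf1_def, huz, hdz, Real.zero_rpow hp0.ne']
  have hz2 : ∀ t ∈ Ioc (0:ℝ) b, f2 t = 0 := by
    intro t ht
    have hta : t < a := lt_of_le_of_lt ht.2 hba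
    have huz : u t = 0 := hua t hta
    simp [hf2_def, huz, Real.zero_rpow hp0.ne']
  have hred : ∀ g : ℝ → ℝ, (∀ t ∈ Ioc (0:ℝ) b, g t = 0) → IntegrableOn g (Ioc b 1) volume →
      ∫ t in Ioc (0:ℝ) 1, g t = ∫ t in Ioc b 1, g t := by
    intro g hg hgi
    have hg0 : IntegrableOn g (Ioc 0 b) volume :=
      integrableOn_zero.congr_fun (fun t ht => (hg t ht).symm) measurableSet_Ioc
    rw [← Set.Ioc_union_Ioc_eq_Ioc hb0.le hb1.le,
      setIntegral_union (Set.Ioc_disjoint_Ioc_of_le le_rfl) measurableSet_Ioc hg0 hgi,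
      setIntegral_congr_fun measurableSet_Ioc (fun t ht => hg t ht), integral_zero, zero_add]
  have hIoc1 := hred f1 hz1 hInt1
  have hIoc2 := hred f2 hz2 hInt2
  -- boundary term
  have hφ1 : lam ^ (p-1) / 2 * |u 1| ^ p ≤ φ 1 * F 1 := by
    have hφ1v : φ 1 = lam ^ (p - 1) * (1 - ε * (Real.log R)⁻¹) := by
      simp only [hφ_def]
      rw [Real.one_rpow, Real.log_one, sub_zero, one_mul]
    have hinv0 : 0 < (Real.log R)⁻¹ := inv_pos.2 (by linarith)
    have hinv1 : (Real.log R)⁻¹ ≤ 1 := by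
      rw [inv_le_one_iff₀]; right; linarith
    have hφ1ge : lam ^ (p-1) / 2 ≤ φ 1 := by
      rw [hφ1v]
      have h2 : ε * (Real.log R)⁻¹ ≤ 1/2 := by nlinarith
      nlinarith [hLp1]
    exact mul_le_mul_of_nonneg_right hφ1ge (Real.rpow_nonneg (abs_nonneg _) p)
  rw [ge_iff_le, hIoc1, hIoc2]
  have hF1 : F 1 = |u 1| ^ p := rfl
  linarith [h0, hI, hFTC, hφ1]
end

section
/- Let α = 1 - 1/p, 1 < p < ∞, R > e. There exist positive constants C₅ and L (depending only on p and R) such that for every u ∈ C_c^∞((0,1]): ∫₀¹ (|u'|^p − Λ_{α,p}|u/t|^p A₁(t)^{-p}) t^{p-1} dt + L|u(1)|^p ≥ C₅ ∫₀¹ |u/t|^p t^{p-1} A₁(t)^{-p} A₂(t)^{-2} dt. -/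
open MeasureTheory Real Set

/-- Mean value bound for `x ↦ x^r` on an interval of positive reals. -/
lemma rpow_mvt {r a b M : ℝ} (ha : 0 < a)
    (hM : ∀ z ∈ Icc a b, |r * z ^ (r - 1)| ≤ M) {x y : ℝ}
    (hx : x ∈ Icc a b) (hy : y ∈ Icc a b) : |x ^ r - y ^ r| ≤ M * |x - y| := by
  have h := Convex.norm_image_sub_le_of_norm_hasDerivWithin_le
    (f := fun z : ℝ => z ^ r) (f' := fun z : ℝ => r * z ^ (r - 1)) (s := Icc a b)
    (fun z hz => (Real.hasDerivAt_rpow_const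
      (Or.inl (ne_of_gt (lt_of_lt_of_le ha hz.1)))).hasDerivWithinAt)
    (fun z hz => by rw [Real.norm_eq_abs]; exact hM z hz)
    (convex_Icc a b) hy hx
  simpa [Real.norm_eq_abs] using h

lemma rpow_second_order {c h q : ℝ} (hc : 0 < c) (hq : 1 < q) (hh : 0 ≤ h) (hhc : h ≤ c) :
    (c + h) ^ q ≤ c ^ q + q * c ^ (q - 1) * h
      + (q * ((q - 1) * (c ^ (q - 2) + (2 * c) ^ (q - 2)))) * h ^ 2 := by
  set M₁ : ℝ := (q - 1) * (c ^ (q - 2) + (2 * c) ^ (q - 2)) with hM₁def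
  have hM₁ : 0 ≤ M₁ :=
    mul_nonneg (by linarith) (add_nonneg (Real.rpow_nonneg hc.le _)
      (Real.rpow_nonneg (by linarith) _))
  -- first-order Lipschitz bound for x ↦ x^(q-1) on [c, 2c]
  have step1 : ∀ x ∈ Icc c (2 * c), x ^ (q - 1) - c ^ (q - 1) ≤ M₁ * (x - c) := by
    intro x hx
    have hbound : ∀ z ∈ Icc c (2 * c), |(q - 1) * z ^ (q - 1 - 1)| ≤ M₁ := by
      intro z hz
      have hz0 : 0 < z := lt_of_lt_of_le hc hz.1
      have hzq : z ^ (q - 2) ≤ c ^ (q - 2) + (2 * c) ^ (q - 2) := by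
        rcases le_or_gt 0 (q - 2) with h2 | h2
        · have : z ^ (q - 2) ≤ (2 * c) ^ (q - 2) := Real.rpow_le_rpow hz0.le hz.2 h2
          have := Real.rpow_nonneg hc.le (q - 2)
          linarith
        · have : z ^ (q - 2) ≤ c ^ (q - 2) := Real.rpow_le_rpow_of_nonpos hc hz.1 h2.le
          have := Real.rpow_nonneg (by linarith : (0:ℝ) ≤ 2 * c) (q - 2)
          linarith
      rw [show q - 1 - 1 = q - 2 by ring,
        abs_of_nonneg (mul_nonneg (by linarith) (Real.rpow_nonneg hz0.le _)), hM₁def]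
      have := Real.rpow_nonneg hz0.le (q - 2)
      nlinarith
    have := rpow_mvt hc hbound hx (left_mem_Icc.mpr (by linarith))
    have habs : x ^ (q - 1) - c ^ (q - 1) ≤ |x ^ (q - 1) - c ^ (q - 1)| := le_abs_self _
    have hxc : |x - c| = x - c := abs_of_nonneg (by linarith [hx.1])
    rw [hxc] at this
    linarith
  -- second-order bound via MVT applied to x ↦ x^q - q c^(q-1) x on [c, c+h]
  have hmem1 : c ∈ Icc c (c + h) := left_mem_Icc.mpr (by linarith)
  have hmem2 : c + h ∈ Icc c (c + h) := right_mem_Icc.mpr (by linarith)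
  have hsub : Icc c (c + h) ⊆ Icc c (2 * c) := Icc_subset_Icc le_rfl (by linarith)
  have hg : ∀ x ∈ Icc c (c + h), HasDerivWithinAt
      (fun x : ℝ => x ^ q - q * c ^ (q - 1) * x)
      (q * x ^ (q - 1) - q * c ^ (q - 1)) (Icc c (c + h)) x := by
    intro x hx
    have h1 : HasDerivAt (fun x : ℝ => x ^ q - q * c ^ (q - 1) * x)
        (q * x ^ (q - 1) - q * c ^ (q - 1)) x := by
      have := (Real.hasDerivAt_rpow_const
        (Or.inl (ne_of_gt (lt_of_lt_of_le hc hx.1))) (p := q)).sub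
        ((hasDerivAt_id x).const_mul (q * c ^ (q - 1)))
      rw [mul_one] at this; exact this
    exact h1.hasDerivWithinAt
  have hbound2 : ∀ x ∈ Icc c (c + h),
      ‖q * x ^ (q - 1) - q * c ^ (q - 1)‖ ≤ q * M₁ * h := by
    intro x hx
    have hx' := hsub hx
    have h1 : x ^ (q - 1) - c ^ (q - 1) ≤ M₁ * (x - c) := step1 x hx'
    have h2 : 0 ≤ x ^ (q - 1) - c ^ (q - 1) :=
      sub_nonneg.2 (Real.rpow_le_rpow hc.le hx.1 (by linarith))
    rw [Real.norm_eq_abs, show q * x ^ (q - 1) - q * c ^ (q - 1)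
        = q * (x ^ (q - 1) - c ^ (q - 1)) by ring,
      abs_of_nonneg (mul_nonneg (by linarith) h2)]
    have hxch : x - c ≤ h := by linarith [hx.2]
    have hxc0 : 0 ≤ x - c := by linarith [hx.1]
    have h3 : q * (x ^ (q - 1) - c ^ (q - 1)) ≤ q * (M₁ * (x - c)) :=
      mul_le_mul_of_nonneg_left h1 (by linarith)
    have h4 : M₁ * (x - c) ≤ M₁ * h := mul_le_mul_of_nonneg_left hxch hM₁
    nlinarith
  have hmvt := Convex.norm_image_sub_le_of_norm_hasDerivWithin_le hg hbound2
    (convex_Icc _ _) hmem1 hmem2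
  rw [Real.norm_eq_abs, Real.norm_eq_abs, show c + h - c = h by ring,
    abs_of_nonneg hh] at hmvt
  have habs := le_abs_self
    ((c + h) ^ q - q * c ^ (q - 1) * (c + h) - (c ^ q - q * c ^ (q - 1) * c))
  nlinarith

lemma young_aux {p q t V X Y : ℝ} (hpq : p.HolderConjugate q)
    (ht : 0 < t) (hV : 0 ≤ V) (hX : 0 ≤ X) (hY : 0 ≤ Y) :
    p * V * X ^ (p - 1) * Y ≤ Y ^ p * t ^ (p - 1) + (p - 1) * V ^ q * X ^ p / t := by
  have hp0 : 0 < p := hpq.pos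
  have hq0 : 0 < q := hpq.symm.pos
  set e : ℝ := (p - 1) / p with hedef
  set a : ℝ := p ^ (p⁻¹ : ℝ) * (Y * t ^ e) with hadef
  set b : ℝ := p ^ (q⁻¹ : ℝ) * (V * X ^ (p - 1) * t ^ (-e)) with hbdef
  have ha : 0 ≤ a := mul_nonneg (Real.rpow_nonneg hp0.le _)
    (mul_nonneg hY (Real.rpow_nonneg ht.le _))
  have hb : 0 ≤ b := mul_nonneg (Real.rpow_nonneg hp0.le _)
    (mul_nonneg (mul_nonneg hV (Real.rpow_nonneg hX _)) (Real.rpow_nonneg ht.le _))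
  have key := Real.young_inequality_of_nonneg ha hb hpq
  have hpp : p ^ (p⁻¹ : ℝ) * p ^ (q⁻¹ : ℝ) = p := by
    rw [← Real.rpow_add hp0, hpq.inv_add_inv_eq_one, Real.rpow_one]
  have hte : t ^ e * t ^ (-e) = 1 := by
    rw [← Real.rpow_add ht]; simp
  have hab : a * b = p * (V * X ^ (p - 1) * Y) := by
    have : a * b = p ^ (p⁻¹ : ℝ) * p ^ (q⁻¹ : ℝ) * (V * X ^ (p - 1) * Y)
        * (t ^ e * t ^ (-e)) := by rw [hadef, hbdef]; ring
    rw [this, hpp, hte, mul_one]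
  have hap : a ^ p = p * (Y ^ p * t ^ (p - 1)) := by
    rw [hadef, Real.mul_rpow (Real.rpow_nonneg hp0.le _)
        (mul_nonneg hY (Real.rpow_nonneg ht.le _)),
      Real.mul_rpow hY (Real.rpow_nonneg ht.le _),
      ← Real.rpow_mul hp0.le, ← Real.rpow_mul ht.le,
      inv_mul_cancel₀ hp0.ne', Real.rpow_one, hedef,
      div_mul_cancel₀ _ hp0.ne']
  have hbq : b ^ q = p * (V ^ q * X ^ p * t⁻¹) := by
    have heq : e * q = 1 := by
      rw [hedef, div_mul_eq_mul_div, hpq.sub_one_mul_conj, div_self hp0.ne']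
    rw [hbdef, Real.mul_rpow (Real.rpow_nonneg hp0.le _)
        (mul_nonneg (mul_nonneg hV (Real.rpow_nonneg hX _)) (Real.rpow_nonneg ht.le _)),
      Real.mul_rpow (mul_nonneg hV (Real.rpow_nonneg hX _)) (Real.rpow_nonneg ht.le _),
      Real.mul_rpow hV (Real.rpow_nonneg hX _),
      ← Real.rpow_mul hp0.le, ← Real.rpow_mul hX, ← Real.rpow_mul ht.le,
      inv_mul_cancel₀ hq0.ne', Real.rpow_one, hpq.sub_one_mul_conj,
      neg_mul, heq, Real.rpow_neg_one]
  rw [hab, hap, hbq] at key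
  have hdiv : p / q = p - 1 := hpq.div_conj_eq_sub_one
  have h1 : p * (V * X ^ (p - 1) * Y) ≤ Y ^ p * t ^ (p - 1)
      + (p / q) * (V ^ q * X ^ p * t⁻¹) := by
    calc p * (V * X ^ (p - 1) * Y) ≤ p * (Y ^ p * t ^ (p - 1)) / p
        + p * (V ^ q * X ^ p * t⁻¹) / q := key
      _ = Y ^ p * t ^ (p - 1) + (p / q) * (V ^ q * X ^ p * t⁻¹) := by
          field_simp
  rw [hdiv] at h1
  calc p * V * X ^ (p - 1) * Y = p * (V * X ^ (p - 1) * Y) := by ring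
    _ ≤ Y ^ p * t ^ (p - 1) + (p - 1) * (V ^ q * X ^ p * t⁻¹) := h1
    _ = Y ^ p * t ^ (p - 1) + (p - 1) * V ^ q * X ^ p / t := by
        rw [div_eq_mul_inv]; ring

lemma phi_bound {p q c K h : ℝ} (hpq : p.HolderConjugate q)
    (hcdef : c = ((p - 1) / p) ^ (p - 1))
    (hKdef : K = (p - 1) * (q * ((q - 1) * (c ^ (q - 2) + (2 * c) ^ (q - 2)))))
    (hh : 0 ≤ h) (hhc : h ≤ c) :
    (1 - 1/p) ^ p - K * h ^ 2 ≤ (p - 1) * ((c + h) - (c + h) ^ q) := by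
  have hp := hpq.lt
  have hp0 : 0 < p := hpq.pos
  have hp1 : (0:ℝ) < p - 1 := by linarith
  have ha0 : 0 < (p - 1) / p := div_pos hp1 hp0
  have hc0 : 0 < c := hcdef ▸ Real.rpow_pos_of_pos ha0 _
  have hq1 : 1 < q := hpq.symm.lt
  have hq : q = p / (p - 1) := hpq.conjugate_eq
  have hq1' : q - 1 = 1 / (p - 1) := by rw [hq]; field_simp; ring
  have hcq1 : c ^ (q - 1) = (p - 1) / p := by
    rw [hcdef, ← Real.rpow_mul ha0.le, hq1',
      show (p - 1) * (1 / (p - 1)) = 1 by field_simp, Real.rpow_one]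
  have hqc : q * c ^ (q - 1) = 1 := by rw [hcq1, hq]; field_simp
  have hcq : c ^ q = ((p - 1) / p) ^ p := by
    rw [hcdef, ← Real.rpow_mul ha0.le, hpq.sub_one_mul_conj]
  have hΛ : (p - 1) * (c - c ^ q) = (1 - 1/p) ^ p := by
    have h1a : (1 : ℝ) - 1/p = (p - 1)/p := by field_simp
    rw [hcq, hcdef, h1a]
    have hsplit : ((p - 1)/p) ^ p = ((p - 1)/p) ^ (p - 1) * ((p - 1)/p) := by
      rw [← Real.rpow_add_one ha0.ne' (p - 1)]; ring_nf
    rw [hsplit]; field_simp; ring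
  have h2 := rpow_second_order hc0 hq1 hh hhc
  have h3 := mul_le_mul_of_nonneg_left h2 hp1.le
  have h4 : (p - 1) * (q * c ^ (q - 1) * h) = (p - 1) * h := by
    rw [hqc, one_mul]
  nlinarith [h3, h4, hΛ]

lemma abs_term_le {p x : ℝ} (hp : 1 < p) : |p * |x| ^ (p - 2) * x| ≤ p * |x| ^ (p - 1) := by
  rcases eq_or_ne x 0 with rfl | hx
  · simp only [abs_zero, mul_zero, abs_zero]
    positivity
  · have hx0 : (0:ℝ) < |x| := abs_pos.mpr hx
    have hp0 : (0:ℝ) < p := by linarith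
    rw [abs_mul, abs_mul, abs_of_nonneg hp0.le,
      abs_of_nonneg (Real.rpow_nonneg (abs_nonneg x) _)]
    have : |x| ^ (p - 2) * |x| = |x| ^ (p - 1) := by
      rw [← Real.rpow_add_one (abs_ne_zero.mpr hx) (p - 2)]
      congr 1; ring
    rw [mul_assoc, this]

lemma hasDerivAt_V {R c ε p t : ℝ} (hR : Real.exp 1 < R) (ht : 0 < t)
    (htR : t < R / Real.exp 1) :
    HasDerivAt
      (fun s : ℝ => (c + ε * (Real.log (Real.log (R / s)))⁻¹) * Real.log (R / s) ^ (1 - p))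
      ((ε / Real.log (Real.log (R / t)) ^ 2
          + (p - 1) * (c + ε * (Real.log (Real.log (R / t)))⁻¹))
        * Real.log (R / t) ^ (-p) / t) t := by
  have hR0 : 0 < R := lt_trans (Real.exp_pos 1) hR
  have hRt : Real.exp 1 < R / t := by
    rw [lt_div_iff₀ ht]
    have := (lt_div_iff₀ (Real.exp_pos 1)).mp htR
    linarith [this]
  have hl : 1 < Real.log (R / t) := by
    have := Real.log_lt_log (Real.exp_pos 1) hRt
    rwa [Real.log_exp] at this
  have hl0 : 0 < Real.log (R / t) := by linarith
  have hs0 : 0 < Real.log (Real.log (R / t)) := Real.log_pos hl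
  have h2 : HasDerivAt (fun s : ℝ => Real.log (R / s)) (-t⁻¹) t := by
    have h1 : HasDerivAt (fun s : ℝ => Real.log R - Real.log s) (-t⁻¹) t :=
      (Real.hasDerivAt_log ht.ne').const_sub (Real.log R)
    apply h1.congr_of_eventuallyEq
    filter_upwards [eventually_gt_nhds ht] with s hs
    rw [Real.log_div hR0.ne' hs.ne']
  have hA2 : HasDerivAt (fun s : ℝ => Real.log (Real.log (R / s)))
      ((Real.log (R / t))⁻¹ * -t⁻¹) t :=
    by have := (Real.hasDerivAt_log hl0.ne').comp t h2; exact this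
  have hinv : HasDerivAt (fun s : ℝ => c + ε * (Real.log (Real.log (R / s)))⁻¹)
      (ε * (-((Real.log (R / t))⁻¹ * -t⁻¹) / Real.log (Real.log (R / t)) ^ 2)) t :=
    ((hA2.inv hs0.ne').const_mul ε).const_add c
  have hpow : HasDerivAt (fun s : ℝ => Real.log (R / s) ^ (1 - p))
      (-t⁻¹ * (1 - p) * Real.log (R / t) ^ (1 - p - 1)) t :=
    h2.rpow_const (Or.inl hl0.ne')
  have := hinv.mul hpow
  refine this.congr_deriv ?_; symm
  have e1 : Real.log (R / t) ^ (1 - p - 1) = Real.log (R / t) ^ (-p) := by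
    congr 1; ring
  have e2 : (Real.log (R / t))⁻¹ * Real.log (R / t) ^ (1 - p)
      = Real.log (R / t) ^ (-p) := by
    rw [← Real.rpow_neg_one, ← Real.rpow_add hl0]; congr 1; ring
  rw [e1]
  field_simp
  rw [← e2]
  field_simp
  ring

lemma W_core {p q c K ε C₅ l s t : ℝ} (hpq : p.HolderConjugate q)
    (hcdef : c = ((p - 1) / p) ^ (p - 1))
    (hKdef : K = (p - 1) * (q * ((q - 1) * (c ^ (q - 2) + (2 * c) ^ (q - 2)))))
    (hl : 1 < l) (hs : 0 < s) (hεs : ε ≤ c * s) (hε2 : K * ε ≤ 1 / 2) (hε0 : 0 < ε)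
    (hC₅ : C₅ = ε / 2) (ht : 0 < t) :
    (1 - 1/p) ^ p * l ^ (-p) / t + C₅ * (l ^ (-p) / (s ^ 2 * t))
      ≤ (ε / s ^ 2 + (p - 1) * (c + ε * s⁻¹)) * l ^ (-p) / t
        - (p - 1) * ((c + ε * s⁻¹) * l ^ (1 - p)) ^ q / t := by
  have hp := hpq.lt
  have hl0 : (0:ℝ) < l := by linarith
  have ha0 : 0 < (p - 1) / p := div_pos (by linarith) hpq.pos
  have hc0 : 0 < c := hcdef ▸ Real.rpow_pos_of_pos ha0 _
  have hh0 : 0 ≤ ε * s⁻¹ := mul_nonneg hε0.le (inv_nonneg.mpr hs.le)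
  have hhc : ε * s⁻¹ ≤ c := by
    rw [← div_eq_mul_inv]
    exact (div_le_iff₀ hs).mpr (by linarith [hεs])
  have key := phi_bound hpq hcdef hKdef hh0 hhc
  have hK0 : 0 ≤ K := by
    rw [hKdef]
    have h1 := Real.rpow_nonneg hc0.le (q - 2)
    have h2 := Real.rpow_nonneg (by linarith : (0:ℝ) ≤ 2 * c) (q - 2)
    have hq1 := hpq.symm.lt
    have : (0:ℝ) ≤ c ^ (q - 2) + (2 * c) ^ (q - 2) := by linarith
    apply mul_nonneg (by linarith)
    apply mul_nonneg (by linarith)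
    apply mul_nonneg (by linarith) this
  have hKε : K * ε ^ 2 ≤ ε / 2 := by nlinarith
  have hinv2 : (0:ℝ) ≤ (s ^ 2)⁻¹ := by positivity
  have hsq : (ε * s⁻¹) ^ 2 = ε ^ 2 * (s ^ 2)⁻¹ := by
    rw [mul_pow, ← inv_pow]
  have hscalar : (1 - 1/p) ^ p + C₅ * (s ^ 2)⁻¹
      ≤ ε * (s ^ 2)⁻¹ + (p - 1) * ((c + ε * s⁻¹) - (c + ε * s⁻¹) ^ q) := by
    have h5 : K * ((ε * s⁻¹) ^ 2) ≤ (ε / 2) * (s ^ 2)⁻¹ := by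
      rw [hsq, ← mul_assoc]
      exact mul_le_mul_of_nonneg_right hKε hinv2
    have h6 : C₅ * (s ^ 2)⁻¹ = (ε / 2) * (s ^ 2)⁻¹ := by rw [hC₅]
    nlinarith [key]
  have hA : (0:ℝ) ≤ l ^ (-p) / t := div_nonneg (Real.rpow_nonneg hl0.le _) ht.le
  have hcs : ((c + ε * s⁻¹) * l ^ (1 - p)) ^ q = (c + ε * s⁻¹) ^ q * l ^ (-p) := by
    rw [Real.mul_rpow (by linarith) (Real.rpow_nonneg hl0.le _),
      ← Real.rpow_mul hl0.le]
    congr 2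
    have := hpq.sub_one_mul_conj
    nlinarith [this]
  have hmul := mul_le_mul_of_nonneg_right hscalar hA
  have hs2 : s ^ 2 ≠ 0 := by positivity
  rw [hcs]
  set Λ : ℝ := (1 - 1/p) ^ p with hΛdef
  set X : ℝ := l ^ (-p) with hXdef
  set Z : ℝ := (c + ε * s⁻¹) ^ q with hZdef
  calc Λ * X / t + C₅ * (X / (s ^ 2 * t))
      = (Λ + C₅ * (s ^ 2)⁻¹) * (X / t) := by
        simp only [div_eq_mul_inv, mul_inv]; ring
    _ ≤ (ε * (s ^ 2)⁻¹ + (p - 1) * ((c + ε * s⁻¹) - Z)) * (X / t) := hmul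
    _ = (ε / s ^ 2 + (p - 1) * (c + ε * s⁻¹)) * X / t - (p - 1) * (Z * X) / t := by
        simp only [div_eq_mul_inv, mul_inv]; ring

lemma pointwise_core {p q c K ε C₅ l s t U U' : ℝ} (hpq : p.HolderConjugate q)
    (hcdef : c = ((p - 1) / p) ^ (p - 1))
    (hKdef : K = (p - 1) * (q * ((q - 1) * (c ^ (q - 2) + (2 * c) ^ (q - 2)))))
    (hl : 1 < l) (hs : 0 < s) (hεs : ε ≤ c * s) (hε2 : K * ε ≤ 1 / 2) (hε0 : 0 < ε)
    (hC₅ : C₅ = ε / 2) (ht : 0 < t) :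
    -(((ε / s ^ 2 + (p - 1) * (c + ε * s⁻¹)) * l ^ (-p) / t) * |U| ^ p
        + ((c + ε * s⁻¹) * l ^ (1 - p)) * ((p * |U| ^ (p - 2) * U) * U'))
      ≤ (|U'| ^ p - (1 - 1/p) ^ p * (|U| / t) ^ p * l ^ (-p)) * t ^ (p - 1)
        - C₅ * ((|U| / t) ^ p * t ^ (p - 1) * l ^ (-p) * s ^ (-(2:ℝ))) := by
  have hp := hpq.lt
  have hl0 : (0:ℝ) < l := by linarith
  have ha0 : 0 < (p - 1) / p := div_pos (by linarith) hpq.pos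
  have hc0 : 0 < c := hcdef ▸ Real.rpow_pos_of_pos ha0 _
  have hX0 : (0:ℝ) ≤ |U| := abs_nonneg U
  have hY0 : (0:ℝ) ≤ |U'| := abs_nonneg U'
  have hV0 : (0:ℝ) ≤ (c + ε * s⁻¹) * l ^ (1 - p) :=
    mul_nonneg (by positivity) (Real.rpow_nonneg hl0.le _)
  have young := young_aux (V := (c + ε * s⁻¹) * l ^ (1 - p)) hpq ht hV0 hX0 hY0
  have wcore := W_core (t := t) hpq hcdef hKdef hl hs hεs hε2 hε0 hC₅ ht
  have habs := abs_term_le (x := U) hp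
  have hterm : -(((c + ε * s⁻¹) * l ^ (1 - p)) * (p * |U| ^ (p - 1)) * |U'|)
      ≤ ((c + ε * s⁻¹) * l ^ (1 - p)) * ((p * |U| ^ (p - 2) * U) * U') := by
    have h1 : |((c + ε * s⁻¹) * l ^ (1 - p)) * ((p * |U| ^ (p - 2) * U) * U')|
        ≤ ((c + ε * s⁻¹) * l ^ (1 - p)) * (p * |U| ^ (p - 1)) * |U'| := by
      rw [abs_mul, abs_of_nonneg hV0, abs_mul]
      have := mul_le_mul_of_nonneg_right habs hY0
      calc ((c + ε * s⁻¹) * l ^ (1 - p)) * (|p * |U| ^ (p - 2) * U| * |U'|)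
          ≤ ((c + ε * s⁻¹) * l ^ (1 - p)) * ((p * |U| ^ (p - 1)) * |U'|) :=
            mul_le_mul_of_nonneg_left this hV0
        _ = ((c + ε * s⁻¹) * l ^ (1 - p)) * (p * |U| ^ (p - 1)) * |U'| := by ring
    linarith [neg_abs_le (((c + ε * s⁻¹) * l ^ (1 - p)) * ((p * |U| ^ (p - 2) * U) * U')), h1]
  have hXp : (0:ℝ) ≤ |U| ^ p := Real.rpow_nonneg hX0 _
  have hw' := mul_le_mul_of_nonneg_right wcore hXp
  -- rewrite the goal's right-hand side
  have e1 : (|U| / t) ^ p = |U| ^ p / t ^ p := Real.div_rpow hX0 ht.le p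
  have e2 : t ^ (p - 1) = t ^ p / t := by
    rw [Real.rpow_sub ht, Real.rpow_one]
  have e5 : s ^ (-(2:ℝ)) = (s ^ 2)⁻¹ := by
    rw [Real.rpow_neg hs.le, show ((2:ℝ)) = ((2:ℕ):ℝ) by norm_num, Real.rpow_natCast]
  have hgoal_eq : (|U'| ^ p - (1 - 1/p) ^ p * (|U| / t) ^ p * l ^ (-p)) * t ^ (p - 1)
        - C₅ * ((|U| / t) ^ p * t ^ (p - 1) * l ^ (-p) * s ^ (-(2:ℝ)))
      = |U'| ^ p * t ^ (p - 1)
        - ((1 - 1/p) ^ p * l ^ (-p) / t + C₅ * (l ^ (-p) / (s ^ 2 * t))) * |U| ^ p := by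
    rw [e1, e5]
    rw [show t ^ (p - 1) = t ^ p / t from e2]
    have htp : t ^ p ≠ 0 := (Real.rpow_pos_of_pos ht p).ne'
    have hs2 : (s:ℝ) ^ 2 ≠ 0 := by positivity
    set Λ : ℝ := (1 - 1/p) ^ p
    set A : ℝ := |U'| ^ p
    set B : ℝ := |U| ^ p
    set X : ℝ := l ^ (-p)
    set T : ℝ := t ^ p
    field_simp
    ring
  rw [hgoal_eq]
  -- now combine
  set V : ℝ := (c + ε * s⁻¹) * l ^ (1 - p) with hVdef
  set Vq : ℝ := V ^ q with hVqdef
  set Λ : ℝ := (1 - 1/p) ^ p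
  set B : ℝ := |U| ^ p
  set Xl : ℝ := l ^ (-p)
  have hexp : ((ε / s ^ 2 + (p - 1) * (c + ε * s⁻¹)) * Xl / t - (p - 1) * Vq / t) * B
      = ((ε / s ^ 2 + (p - 1) * (c + ε * s⁻¹)) * Xl / t) * B - ((p - 1) * Vq / t) * B := by
    ring
  have hexp2 : (p - 1) * Vq * B / t = ((p - 1) * Vq / t) * B := by ring
  linarith [young, hw', hterm, hexp, hexp2]

/-- Critical case `α = 1 - 1/p` with doubly-logarithmic remainder. -/
theorem hardy_critical_loglog_remainder (p R : ℝ) (hp : 1 < p)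
    (hR : Real.exp 1 < R) :
    ∃ C₅ > (0:ℝ), ∃ L > (0:ℝ), ∀ u : ℝ → ℝ, ContDiff ℝ (⊤ : ℕ∞) u →
      (∃ a > (0:ℝ), ∀ t < a, u t = 0) →
      (∫ t in Ioc (0:ℝ) 1,
          (|deriv u t| ^ p
            - (1 - 1/p) ^ p * (|u t| / t) ^ p * (Real.log (R / t)) ^ (-p)) * t ^ (p - 1))
        + L * |u 1| ^ p ≥
      C₅ * ∫ t in Ioc (0:ℝ) 1,
          (|u t| / t) ^ p * t ^ (p - 1) * (Real.log (R / t)) ^ (-p)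
            * (Real.log (Real.log (R / t))) ^ (-(2:ℝ)) := by
  have hp0 : (0:ℝ) < p := by linarith
  have hp1 : (0:ℝ) < p - 1 := by linarith
  have hpq : p.HolderConjugate (p / (p - 1)) := (Real.holderConjugate_iff_eq_conjExponent hp).mpr rfl
  set q : ℝ := p / (p - 1) with hqdef
  have hq1 : 1 < q := hpq.symm.lt
  set c : ℝ := ((p - 1) / p) ^ (p - 1) with hcdef
  have hc0 : 0 < c := Real.rpow_pos_of_pos (div_pos hp1 hp0) _
  set K : ℝ := (p - 1) * (q * ((q - 1) * (c ^ (q - 2) + (2 * c) ^ (q - 2)))) with hKdef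
  have hK0 : 0 < K := by
    have h1 := Real.rpow_pos_of_pos hc0 (q - 2)
    have h2 := Real.rpow_pos_of_pos (by linarith : (0:ℝ) < 2 * c) (q - 2)
    apply mul_pos hp1
    apply mul_pos (by linarith)
    apply mul_pos (by linarith)
    linarith
  have hlogR : 1 < Real.log R := by
    have := Real.log_lt_log (Real.exp_pos 1) hR
    rwa [Real.log_exp] at this
  set s₀ : ℝ := Real.log (Real.log R) with hs₀def
  have hs₀ : 0 < s₀ := Real.log_pos hlogR
  set ε : ℝ := min (c * s₀) (1 / (2 * K)) with hεdef
  have hε0 : 0 < ε := lt_min (by positivity) (by positivity)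
  have hεs : ε ≤ c * s₀ := min_le_left _ _
  have hε2 : K * ε ≤ 1 / 2 := by
    have h1 : ε ≤ 1 / (2 * K) := min_le_right _ _
    have h2 := mul_le_mul_of_nonneg_left h1 hK0.le
    have h3 : K * (1 / (2 * K)) = 1 / 2 := by field_simp
    linarith
  set C₅ : ℝ := ε / 2 with hC₅def
  set L : ℝ := (c + ε * s₀⁻¹) * Real.log R ^ (1 - p) with hLdef
  have hL0 : 0 < L :=
    mul_pos (by positivity) (Real.rpow_pos_of_pos (by linarith) _)
  refine ⟨C₅, by positivity, L, hL0, ?_⟩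
  rintro u hu ⟨a, ha0, hua⟩
  set a' : ℝ := min a 1 with ha'def
  have ha'0 : 0 < a' := lt_min ha0 one_pos
  have ha'1 : a' ≤ 1 := min_le_right _ _
  have hu0 : ∀ t, t < a' → u t = 0 := fun t htt =>
    hua t (lt_of_lt_of_le htt (min_le_left _ _))
  have hcu : Continuous u := hu.continuous
  have hcu' : Continuous (deriv u) := hu.continuous_deriv (by simp)
  have hua' : u a' = 0 := by
    have h1 : Filter.Tendsto u (nhdsWithin a' (Iio a')) (nhds (u a')) :=
      (hcu.tendsto a').mono_left nhdsWithin_le_nhds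
    have h2 : Filter.Tendsto u (nhdsWithin a' (Iio a')) (nhds 0) := by
      apply Filter.Tendsto.congr' _ tendsto_const_nhds
      filter_upwards [self_mem_nhdsWithin] with t ht
      exact (hu0 t ht).symm
    exact tendsto_nhds_unique h1 h2
  set f₁ : ℝ → ℝ := fun t =>
    (|deriv u t| ^ p
      - (1 - 1/p) ^ p * (|u t| / t) ^ p * (Real.log (R / t)) ^ (-p)) * t ^ (p - 1)
    with hf₁def
  set f₂ : ℝ → ℝ := fun t =>
    (|u t| / t) ^ p * t ^ (p - 1) * (Real.log (R / t)) ^ (-p)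
      * (Real.log (Real.log (R / t))) ^ (-(2:ℝ)) with hf₂def
  have hRe : 1 < R / Real.exp 1 := (one_lt_div (Real.exp_pos 1)).mpr hR
  have hlfact : ∀ t : ℝ, 0 < t → t ≤ 1 →
      1 < Real.log (R / t) ∧ 0 < Real.log (Real.log (R / t))
        ∧ s₀ ≤ Real.log (Real.log (R / t)) := by
    intro t ht ht1
    have hRt : R ≤ R / t := by
      rw [le_div_iff₀ ht]
      nlinarith [lt_trans (Real.exp_pos 1) hR]
    have hl1 : 1 < Real.log (R / t) := by
      have h2 : Real.log R ≤ Real.log (R / t) :=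
        Real.log_le_log (lt_trans (Real.exp_pos 1) hR) hRt
      linarith
    refine ⟨hl1, Real.log_pos hl1, ?_⟩
    rw [hs₀def]
    exact Real.log_le_log (by linarith)
      (Real.log_le_log (lt_trans (Real.exp_pos 1) hR) hRt)
  set V : ℝ → ℝ := fun t =>
    (c + ε * (Real.log (Real.log (R / t)))⁻¹) * Real.log (R / t) ^ (1 - p) with hVdef
  set Vd : ℝ → ℝ := fun t =>
    (ε / Real.log (Real.log (R / t)) ^ 2
      + (p - 1) * (c + ε * (Real.log (Real.log (R / t)))⁻¹))
      * Real.log (R / t) ^ (-p) / t with hVddef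
  have hVderiv : ∀ t : ℝ, 0 < t → t ≤ 1 → HasDerivAt V (Vd t) t := fun t ht ht1 =>
    hasDerivAt_V hR ht (lt_of_le_of_lt ht1 hRe)
  set g : ℝ → ℝ := fun t => -(V t * |u t| ^ p) with hgdef
  set gd : ℝ → ℝ := fun t =>
    -(Vd t * |u t| ^ p + V t * ((p * |u t| ^ (p - 2) * u t) * deriv u t)) with hgddef
  have hgderiv : ∀ t : ℝ, 0 < t → t ≤ 1 → HasDerivAt g (gd t) t := by
    intro t ht ht1
    have h1 : HasDerivAt (fun τ => |u τ| ^ p) ((p * |u t| ^ (p - 2) * u t) * deriv u t) t := by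
      have hcomp := (hasDerivAt_abs_rpow (u t) hp).comp t
        (hu.differentiable (by simp) t).hasDerivAt
      exact hcomp.congr_deriv (by ring)
    exact ((hVderiv t ht ht1).mul h1).neg
  have hmain : ∀ t : ℝ, 0 < t → t ≤ 1 → gd t ≤ f₁ t - C₅ * f₂ t := by
    intro t ht ht1
    obtain ⟨hl, hs, hss⟩ := hlfact t ht ht1
    have hεs' : ε ≤ c * Real.log (Real.log (R / t)) :=
      le_trans hεs (mul_le_mul_of_nonneg_left hss hc0.le)
    have hpc := pointwise_core (U := u t) (U' := deriv u t) (t := t)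
      hpq hcdef hKdef hl hs hεs' hε2 hε0 hC₅def ht
    simp only [hgddef, hf₁def, hf₂def, hVddef, hVdef]
    exact hpc
  -- continuity facts on [a', 1]
  have hmemfacts : ∀ t : ℝ, t ∈ Icc a' 1 → 0 < t ∧ t ≤ 1 := fun t htt =>
    ⟨lt_of_lt_of_le ha'0 htt.1, htt.2⟩
  have habsu : Continuous fun t => |u t| ^ p :=
    hcu.abs.rpow_const fun x => Or.inr hp0.le
  have hcontV : ContinuousOn V (Icc a' 1) := fun t htt =>
    ((hVderiv t (hmemfacts t htt).1 (hmemfacts t htt).2).continuousAt).continuousWithinAt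
  have hcontg : ContinuousOn g (Icc a' 1) :=
    (hcontV.mul habsu.continuousOn).neg
  have hlogcont : ContinuousOn (fun t : ℝ => Real.log (R / t)) (Icc a' 1) := by
    apply ContinuousOn.log
    · exact continuousOn_const.div continuousOn_id fun t htt =>
        (hmemfacts t htt).1.ne'
    · intro t htt
      have hR0 : (0:ℝ) < R := lt_trans (Real.exp_pos 1) hR
      exact ne_of_gt (div_pos hR0 (hmemfacts t htt).1)
  have hlogne : ∀ t ∈ Icc a' 1, Real.log (R / t) ≠ 0 := fun t htt => by
    have := (hlfact t (hmemfacts t htt).1 (hmemfacts t htt).2).1; linarith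
  have hloglogcont : ContinuousOn (fun t : ℝ => Real.log (Real.log (R / t)))
      (Icc a' 1) := hlogcont.log hlogne
  have hloglogne : ∀ t ∈ Icc a' 1, Real.log (Real.log (R / t)) ≠ 0 := fun t htt => by
    have := (hlfact t (hmemfacts t htt).1 (hmemfacts t htt).2).2.1; linarith
  have hcontf₁ : ContinuousOn f₁ (Icc a' 1) := by
    apply ContinuousOn.mul
    · apply ContinuousOn.sub
      · exact (hcu'.abs.rpow_const fun x => Or.inr hp0.le).continuousOn
      · apply ContinuousOn.mul
        · apply ContinuousOn.mul continuousOn_const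
          apply ContinuousOn.rpow_const
          · exact hcu.abs.continuousOn.div continuousOn_id fun t htt =>
              (hmemfacts t htt).1.ne'
          · exact fun t htt => Or.inr hp0.le
        · exact hlogcont.rpow_const fun t htt => Or.inl (hlogne t htt)
    · exact continuousOn_id.rpow_const fun t htt => Or.inl (hmemfacts t htt).1.ne'
  have hcontf₂ : ContinuousOn f₂ (Icc a' 1) := by
    apply ContinuousOn.mul
    apply ContinuousOn.mul
    apply ContinuousOn.mul
    · apply ContinuousOn.rpow_const
      · exact hcu.abs.continuousOn.div continuousOn_id fun t htt =>
          (hmemfacts t htt).1.ne'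
      · exact fun t htt => Or.inr hp0.le
    · exact continuousOn_id.rpow_const fun t htt => Or.inl (hmemfacts t htt).1.ne'
    · exact hlogcont.rpow_const fun t htt => Or.inl (hlogne t htt)
    · exact hloglogcont.rpow_const fun t htt => Or.inl (hloglogne t htt)
  have hinth : IntegrableOn (fun t => f₁ t - C₅ * f₂ t) (Icc a' 1) :=
    (hcontf₁.sub (continuousOn_const.mul hcontf₂)).integrableOn_Icc
  have hftc : g 1 - g a' ≤ ∫ t in a'..1, (f₁ t - C₅ * f₂ t) := by
    apply intervalIntegral.sub_le_integral_of_hasDeriv_right_of_le ha'1 hcontg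
      (fun t htt => (hgderiv t (lt_trans ha'0 htt.1) htt.2.le).hasDerivWithinAt)
      hinth
    exact fun t htt => hmain t (lt_trans ha'0 htt.1) htt.2.le
  have hga' : g a' = 0 := by
    simp [hgdef, hua', Real.zero_rpow hp0.ne']
  have hg1 : g 1 = -(L * |u 1| ^ p) := by
    have hV1 : V 1 = L := by
      simp only [hVdef, hLdef, hs₀def, div_one]
    simp only [hgdef, hV1]
  -- vanishing below a'
  have hzero : ∀ t : ℝ, 0 < t → t < a' → f₁ t = 0 ∧ f₂ t = 0 := by
    intro t ht htt
    have hut : u t = 0 := hu0 t htt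
    have hdt : deriv u t = 0 := by
      have hev : u =ᶠ[nhds t] fun _ => (0:ℝ) := by
        filter_upwards [Ioo_mem_nhds ht htt] with s hs
        exact hu0 s hs.2
      rw [hev.deriv_eq, deriv_const]
    constructor
    · simp [hf₁def, hut, hdt, Real.zero_rpow hp0.ne']
    · simp [hf₂def, hut, Real.zero_rpow hp0.ne']
  have hne_ae : ∀ᵐ t : ℝ, t ≠ a' :=
    ae_iff.mpr (by simpa using measure_singleton (a' : ℝ))
  have hae₁ : ∀ᵐ t ∂(volume.restrict (Ioc (0:ℝ) a')), f₁ t = 0 := by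
    rw [ae_restrict_iff' measurableSet_Ioc]
    filter_upwards [hne_ae] with t htne htmem
    exact (hzero t htmem.1 (lt_of_le_of_ne htmem.2 htne)).1
  have hae₂ : ∀ᵐ t ∂(volume.restrict (Ioc (0:ℝ) a')), f₂ t = 0 := by
    rw [ae_restrict_iff' measurableSet_Ioc]
    filter_upwards [hne_ae] with t htne htmem
    exact (hzero t htmem.1 (lt_of_le_of_ne htmem.2 htne)).2
  have hIocsplit : Ioc (0:ℝ) 1 = Ioc 0 a' ∪ Ioc a' 1 :=
    (Ioc_union_Ioc_eq_Ioc ha'0.le ha'1).symm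
  have hint₁ : IntegrableOn f₁ (Ioc (0:ℝ) 1) := by
    rw [hIocsplit]
    refine IntegrableOn.union ?_ (hcontf₁.integrableOn_Icc.mono_set Ioc_subset_Icc_self)
    exact (integrable_zero _ _ _).congr (hae₁.mono fun t ht => ht.symm)
  have hint₂ : IntegrableOn f₂ (Ioc (0:ℝ) 1) := by
    rw [hIocsplit]
    refine IntegrableOn.union ?_ (hcontf₂.integrableOn_Icc.mono_set Ioc_subset_Icc_self)
    exact (integrable_zero _ _ _).congr (hae₂.mono fun t ht => ht.symm)
  have haeh : (fun t => f₁ t - C₅ * f₂ t) =ᵐ[volume.restrict (Ioc (0:ℝ) a')]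
      (fun _ => (0:ℝ)) := by
    filter_upwards [hae₁, hae₂] with t h1 h2
    simp [h1, h2]
  have hsplit : ∫ t in Ioc (0:ℝ) 1, (f₁ t - C₅ * f₂ t)
      = ∫ t in Ioc a' 1, (f₁ t - C₅ * f₂ t) := by
    rw [hIocsplit, setIntegral_union (Ioc_disjoint_Ioc_of_le le_rfl) measurableSet_Ioc
      ((integrable_zero _ _ _).congr (haeh.mono fun t ht => ht.symm))
      (hinth.mono_set Ioc_subset_Icc_self),
      integral_eq_zero_of_ae haeh, zero_add]
  have hII : ∫ t in Ioc a' 1, (f₁ t - C₅ * f₂ t) = ∫ t in a'..1, (f₁ t - C₅ * f₂ t) :=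
    (intervalIntegral.integral_of_le ha'1).symm
  have hlow : -(L * |u 1| ^ p) ≤ ∫ t in Ioc (0:ℝ) 1, (f₁ t - C₅ * f₂ t) := by
    rw [hsplit, hII]
    calc -(L * |u 1| ^ p) = g 1 - g a' := by rw [hg1, hga']; ring
      _ ≤ _ := hftc
  have hsub : ∫ t in Ioc (0:ℝ) 1, (f₁ t - C₅ * f₂ t)
      = (∫ t in Ioc (0:ℝ) 1, f₁ t) - C₅ * ∫ t in Ioc (0:ℝ) 1, f₂ t := by
    rw [integral_sub hint₁ (hint₂.const_mul C₅), MeasureTheory.integral_const_mul]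
  rw [hsub] at hlow
  linarith
end
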